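/- Let a₁,…,a_n be distinct reals, ε₁,…,ε_n ∈ {-1,1}, Δᵢ(a) = εᵢ(a-aᵢ), let I ⊆ ℝ be an open interval on which Δᵢ > 0 for all i, let F̂(a) = ∏_{i=1}^n (a-aᵢ), x(a) = ∑_{i=1}^n ξᵢ Δᵢ(a)^{-1/2} with ξᵢ ∈ ℝ, and b_k(a) = ∑_{s=1}^{k} F̂^{(k-s)}(a)/(k-s)! · x^{(s)}(a)/(1/2)_s. Then for every 1 ≤ k ≤ n, the function b̃_k(a) = ∑_{s=1}^{k} C(n-s, k-s) (-a)^{k-s} b_{n-s+1}(a) satisfies b̃_k(a) = (-1)^k ∑_{i=1}^n (ξᵢ / Δᵢ(a)^{1/2}) σ^i_{k-1} on I. -/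

import Mathlib

/-!
On `I` every `Δᵢ` is positive, so `x⁽ˢ⁾(t) / (1/2)ₛ = ∑ᵢ ξᵢ Δᵢ(t)^{-1/2} (-(t - aᵢ)⁻¹)ˢ`, while
`F̂⁽ᵐ⁾(t) / m!` is the `m`-th coefficient of the Taylor expansion `F̂(t + X)`. Writing
`F̂ = (X - aᵢ) Qᵢ`, so that `F̂(t + X) = (X + (t - aᵢ)) Qᵢ(t + X)`, the sum over `s` defining `b_m`
telescopes to `-∑ᵢ ξᵢ Δᵢ^{-1/2} [X^{m-1}] Qᵢ(t + X)`. The binomial combination defining `b̃_k`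
re-expands `Qᵢ(X) = Qᵢ(t + (X - t))`, which extracts `-[X^{n-k}] Qᵢ = (-1)ᵏ σ^i_{k-1}`.
-/

open Polynomial

/-- The Pochhammer symbol `(1/2)_s`. -/
noncomputable def poch (s : ℕ) : ℝ := (ascPochhammer ℝ s).eval (1/2 : ℝ)

/-- For a polynomial `Q` of degree `d` written as `Q(X) = ∑_{k=0}^{d} (-1)^k σ_k X^{d-k}`,
`sig d Q k` is the coefficient `σ_k`, extended by `0` outside `0 ≤ k ≤ d`. -/
noncomputable def sig (d : ℕ) (Q : Polynomial ℝ) (k : ℤ) : ℝ :=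
  if 0 ≤ k ∧ k ≤ (d : ℤ) then (-1 : ℝ) ^ k * Q.coeff (d - k.toNat) else 0

/-- `σ^i_k` for `P(X) = ∏_{j} (X-a_j)`: defined by
`P(X)/(X-aᵢ) = ∑_{k=0}^{n-1} (-1)^k σ^i_k X^{n-1-k}`, with `σ^i_{-1} = σ^i_n = 0`. -/
noncomputable def sigmaI (n : ℕ) (a : Fin n → ℝ) (i : Fin n) (k : ℤ) : ℝ :=
  sig (n - 1) (∏ j ∈ Finset.univ.erase i, (X - C (a j))) k

/-- The coefficient `b_k(a) = ∑_{s=1}^{k} F̂^{(k-s)}(a)/(k-s)! · x^{(s)}(a)/(1/2)_s` where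
`F̂(a) = ∏ᵢ (a-aᵢ)` and `x(a) = ∑ᵢ ξᵢ (εᵢ(a-aᵢ))^{-1/2}`. -/
noncomputable def bk (n : ℕ) (a ε ξ : Fin n → ℝ) (k : ℕ) (t : ℝ) : ℝ :=
  ∑ s ∈ Finset.Icc 1 k,
    iteratedDeriv (k - s) (fun u => ∏ i, (u - a i)) t / (Nat.factorial (k - s) : ℝ) *
      (iteratedDeriv s (fun u => ∑ i, ξ i * (ε i * (u - a i)) ^ (-(1/2) : ℝ)) t / poch s)

theorem iteratedDeriv_comp_mul_left {𝕜 E : Type*} [NontriviallyNormedField 𝕜]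
    [NormedAddCommGroup E] [NormedSpace 𝕜 E] (f : 𝕜 → E) (c : 𝕜) (k : ℕ) (x : 𝕜) :
    iteratedDeriv k (fun y => f (c * y)) x = c ^ k • iteratedDeriv k f (c * x) := by
  induction k generalizing x with
  | zero => simp
  | succ k ih =>
    rw [iteratedDeriv_succ, funext ih, deriv_fun_const_smul_field,
      deriv_comp_mul_left c (iteratedDeriv k f), iteratedDeriv_succ, smul_smul, pow_succ]

-- Valid at every `u`, including `e * (u - c) = 0`, by the junk conventions of `rpow` and `deriv`.
theorem iteratedDeriv_mul_sub_const_rpow (e c r : ℝ) (k : ℕ) (u : ℝ) :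
    iteratedDeriv k (fun u => (e * (u - c)) ^ r) u
      = (descPochhammer ℝ k).eval r * e ^ k * (e * (u - c)) ^ (r - k) := by
  rw [iteratedDeriv_comp_sub_const k (fun v => (e * v) ^ r)]
  dsimp only
  rw [iteratedDeriv_comp_mul_left (fun v => v ^ r), iteratedDeriv_eq_iterate,
    Real.iter_deriv_rpow_const, smul_eq_mul]
  ring

theorem poch_pos (s : ℕ) : 0 < poch s := ascPochhammer_pos s _ (by norm_num)

theorem descPochhammer_eval_neg_half (s : ℕ) :
    (descPochhammer ℝ s).eval (-(1/2)) = (-1) ^ s * poch s := by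
  rw [poch, ← neg_neg (1/2 : ℝ), ascPochhammer_eval_neg_eq_descPochhammer, ← mul_assoc,
    ← pow_add, Even.neg_one_pow ⟨s, rfl⟩, one_mul, neg_neg]

theorem iteratedDeriv_sum_rpow_neg_half_div_poch {ι : Type*} [Fintype ι] (a ε ξ : ι → ℝ) {t : ℝ}
    (ht : ∀ i, 0 < ε i * (t - a i)) (s : ℕ) :
    iteratedDeriv s (fun u => ∑ i, ξ i * (ε i * (u - a i)) ^ (-(1/2) : ℝ)) t / poch s
      = ∑ i, ξ i * (ε i * (t - a i)) ^ (-(1/2) : ℝ) * (-(t - a i)⁻¹) ^ s := by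
  have hsmooth : ∀ i ∈ Finset.univ,
      ContDiffAt ℝ s (fun u => ξ i * (ε i * (u - a i)) ^ (-(1/2) : ℝ)) t :=
    fun i _ => contDiffAt_const.mul <| (Real.contDiffAt_rpow_const_of_ne (ht i).ne').comp t
      (contDiffAt_const.mul (contDiffAt_id.sub contDiffAt_const))
  rw [iteratedDeriv_fun_sum hsmooth, Finset.sum_div]
  refine Finset.sum_congr rfl fun i _ => ?_
  have hε : ε i ≠ 0 := left_ne_zero_of_mul (ht i).ne'
  have ht' : t - a i ≠ 0 := right_ne_zero_of_mul (ht i).ne'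
  rw [iteratedDeriv_const_mul_field, iteratedDeriv_mul_sub_const_rpow,
    descPochhammer_eval_neg_half, Real.rpow_sub (ht i), Real.rpow_natCast, mul_pow,
    neg_pow (t - a i)⁻¹, inv_pow]
  field_simp [(poch_pos s).ne']

namespace Polynomial

theorem iteratedDeriv_eval {𝕜 : Type*} [NontriviallyNormedField 𝕜] (F : 𝕜[X]) (m : ℕ) :
    iteratedDeriv m (fun u => F.eval u) = fun u => (derivative^[m] F).eval u := by
  induction m generalizing F with
  | zero => simp
  | succ m ih =>
    have hderiv : deriv (fun u => F.eval u) = fun u => F.derivative.eval u := by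
      ext u
      exact F.deriv
    rw [iteratedDeriv_succ', hderiv, ih, Function.iterate_succ_apply]

theorem iteratedDeriv_eval_div_factorial {𝕜 : Type*} [NontriviallyNormedField 𝕜] [CharZero 𝕜]
    (F : 𝕜[X]) (m : ℕ) (t : 𝕜) :
    iteratedDeriv m (fun u => F.eval u) t / m.factorial = (taylor t F).coeff m := by
  rw [iteratedDeriv_eval, taylor_coeff, ← factorial_smul_hasseDeriv]
  beta_reduce
  rw [LinearMap.smul_apply, eval_smul, nsmul_eq_mul]
  exact mul_div_cancel_left₀ _ (by exact_mod_cast m.factorial_ne_zero)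

theorem sum_range_neg_inv_pow_mul_coeff_X_add_C_mul {K : Type*} [Field K] (G : K[X])
    {h : K} (hh : h ≠ 0) (j : ℕ) :
    ∑ s ∈ Finset.range (j + 1), (-h⁻¹) ^ (s + 1) * ((X + C h) * G).coeff (j - s) = -G.coeff j := by
  induction j with
  | zero => simp [hh]
  | succ j ih =>
    have hshift : ∑ s ∈ Finset.range (j + 1),
        (-h⁻¹) ^ (s + 1 + 1) * ((X + C h) * G).coeff (j + 1 - (s + 1)) = -h⁻¹ * -G.coeff j := by
      rw [← ih, Finset.mul_sum]
      exact Finset.sum_congr rfl fun s _ => by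
        rw [Nat.add_sub_add_right, pow_succ' _ (s + 1), mul_assoc]
    rw [Finset.sum_range_succ', hshift, Nat.sub_zero, zero_add, pow_one, add_mul, coeff_add,
      coeff_X_mul, coeff_C_mul]
    field_simp
    ring

theorem sum_choose_mul_pow_mul_taylor_coeff {R : Type*} [CommRing R] (P : R[X])
    {n k : ℕ} (hk : 1 ≤ k) (hkn : k ≤ n) (hdeg : P.natDegree < n) (t : R) :
    ∑ s ∈ Finset.Icc 1 k, ((n - s).choose (k - s) : R) * (-t) ^ (k - s) * (taylor t P).coeff (n - s)
      = P.coeff (n - k) := by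
  set Q := taylor t P
  have hQdeg : (hasseDeriv (n - k) Q).natDegree < k := by
    have := natDegree_hasseDeriv_le Q (n - k)
    have : Q.natDegree = P.natDegree := natDegree_taylor P t
    omega
  have hP : P = taylor (-t) Q := by rw [taylor_taylor, neg_add_cancel, taylor_zero]
  rw [hP, taylor_coeff, eval_eq_sum_range' hQdeg, ← Finset.sum_range_reflect,
    ← Finset.Ico_add_one_right_eq_Icc, Finset.sum_Ico_eq_sum_range, Nat.add_sub_cancel]
  refine Finset.sum_congr rfl fun l hl => ?_
  have hl : l < k := Finset.mem_range.mp hl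
  rw [hasseDeriv_coeff, show n - (1 + l) = k - 1 - l + (n - k) by omega,
    show k - (1 + l) = k - 1 - l by omega, Nat.choose_symm_add]
  ring

end Polynomial

/-- `Qᵢ = P / (X - aᵢ)`, the polynomial whose signed coefficients are the `σ^i_k`. -/
noncomputable abbrev prodErase {n : ℕ} (a : Fin n → ℝ) (i : Fin n) : ℝ[X] :=
  ∏ j ∈ Finset.univ.erase i, (X - C (a j))

theorem natDegree_prodErase_lt {n : ℕ} (a : Fin n → ℝ) (i : Fin n) :
    (prodErase a i).natDegree < n := by
  simp [Finset.card_erase_of_mem, i.pos]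

theorem neg_one_pow_mul_sigmaI {n : ℕ} (a : Fin n → ℝ) (i : Fin n) {k : ℕ} (hk : 1 ≤ k)
    (hkn : k ≤ n) : (-1) ^ k * sigmaI n a i ((k : ℤ) - 1) = -(prodErase a i).coeff (n - k) := by
  obtain ⟨k, rfl⟩ := Nat.exists_eq_add_of_le' hk
  rw [sigmaI, sig, if_pos (by omega), Nat.cast_succ, add_sub_cancel_right, zpow_natCast,
    show n - 1 - (k : ℤ).toNat = n - (k + 1) by omega, ← mul_assoc, ← pow_add,
    Odd.neg_one_pow ⟨k, by ring⟩, neg_one_mul]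

theorem bk_eq_sum_taylor_coeff {n : ℕ} (a ε ξ : Fin n → ℝ) {t : ℝ}
    (ht : ∀ i, 0 < ε i * (t - a i)) {m : ℕ} (hm : 1 ≤ m) :
    bk n a ε ξ m t = ∑ i, ξ i * (ε i * (t - a i)) ^ (-(1/2) : ℝ) *
      -(taylor t (prodErase a i)).coeff (m - 1) := by
  set F : ℝ[X] := ∏ i, (X - C (a i))
  have hF : (fun u : ℝ => ∏ i, (u - a i)) = fun u => F.eval u := by
    ext u
    simp [F, eval_prod]
  have hterm : ∀ s ∈ Finset.Icc 1 m,
      iteratedDeriv (m - s) (fun u => F.eval u) t / (m - s).factorial *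
        (iteratedDeriv s (fun u => ∑ i, ξ i * (ε i * (u - a i)) ^ (-(1/2) : ℝ)) t / poch s)
      = ∑ i, ξ i * (ε i * (t - a i)) ^ (-(1/2) : ℝ) *
          ((-(t - a i)⁻¹) ^ s * (taylor t F).coeff (m - s)) := by
    intro s _
    rw [iteratedDeriv_eval_div_factorial, iteratedDeriv_sum_rpow_neg_half_div_poch a ε ξ ht,
      Finset.mul_sum]
    exact Finset.sum_congr rfl fun i _ => by ring
  rw [bk, hF, Finset.sum_congr rfl hterm, Finset.sum_comm]
  refine Finset.sum_congr rfl fun i _ => ?_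
  have hFi : taylor t F = (X + C (t - a i)) * taylor t (prodErase a i) := by
    simp only [F]
    rw [← Finset.mul_prod_erase _ _ (Finset.mem_univ i), taylor_mul, map_sub, taylor_X, taylor_C,
      C_sub, add_sub_assoc]
  obtain ⟨j, rfl⟩ := Nat.exists_eq_add_of_le' hm
  rw [← Finset.mul_sum, hFi, ← Finset.Ico_add_one_right_eq_Icc, Finset.sum_Ico_eq_sum_range,
    Nat.add_sub_cancel,
    ← sum_range_neg_inv_pow_mul_coeff_X_add_C_mul _ (right_ne_zero_of_mul (ht i).ne')]
  refine congrArg _ (Finset.sum_congr rfl fun s _ => ?_)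
  rw [add_comm 1 s, Nat.add_sub_add_right, Nat.add_sub_cancel]

theorem stmt7_general (n : ℕ) (a : Fin n → ℝ)
    (ε : Fin n → ℝ)
    (I : Set ℝ)
    (hΔ : ∀ i, ∀ t ∈ I, 0 < ε i * (t - a i))
    (ξ : Fin n → ℝ) :
    ∀ k : ℕ, 1 ≤ k → k ≤ n → ∀ t ∈ I,
      (∑ s ∈ Finset.Icc 1 k,
          (Nat.choose (n - s) (k - s) : ℝ) * (-t) ^ (k - s) * bk n a ε ξ (n - s + 1) t) =
        (-1 : ℝ) ^ k *
          ∑ i, ξ i / (ε i * (t - a i)) ^ ((1/2) : ℝ) * sigmaI n a i ((k : ℤ) - 1) := by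
  intro k hk hkn t ht
  have hΔt : ∀ i, 0 < ε i * (t - a i) := fun i => hΔ i t ht
  have hb : ∀ s ∈ Finset.Icc 1 k,
      ((n - s).choose (k - s) : ℝ) * (-t) ^ (k - s) * bk n a ε ξ (n - s + 1) t
        = ∑ i, ξ i * (ε i * (t - a i)) ^ (-(1/2) : ℝ) *
          -(((n - s).choose (k - s) : ℝ) * (-t) ^ (k - s) *
            (taylor t (prodErase a i)).coeff (n - s)) := by
    intro s _
    rw [bk_eq_sum_taylor_coeff a ε ξ hΔt le_add_self, Nat.add_sub_cancel, Finset.mul_sum]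
    exact Finset.sum_congr rfl fun i _ => by ring
  rw [Finset.sum_congr rfl hb, Finset.sum_comm, Finset.mul_sum]
  refine Finset.sum_congr rfl fun i _ => ?_
  have hweight :
      ξ i / (ε i * (t - a i)) ^ ((1/2) : ℝ) = ξ i * (ε i * (t - a i)) ^ (-(1/2) : ℝ) := by
    rw [Real.rpow_neg (hΔt i).le, div_eq_mul_inv]
  rw [← Finset.mul_sum, Finset.sum_neg_distrib,
    sum_choose_mul_pow_mul_taylor_coeff _ hk hkn (natDegree_prodErase_lt a i), mul_left_comm,
    neg_one_pow_mul_sigmaI a i hk hkn, hweight]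

/-- In the simple case, for every `1 ≤ k ≤ n`, the coefficient
`b̃_k(a) = ∑_{s=1}^{k} C(n-s, k-s) (-a)^{k-s} b_{n-s+1}(a)` satisfies
`b̃_k(a) = (-1)^k ∑ᵢ (ξᵢ / Δᵢ(a)^{1/2}) σ^i_{k-1}` on `I`. -/
theorem stmt7 (n : ℕ) (a : Fin n → ℝ) (ha : Function.Injective a)
    (ε : Fin n → ℝ) (hε : ∀ i, ε i = 1 ∨ ε i = -1)
    (I : Set ℝ) (hIopen : IsOpen I) (hIconn : I.OrdConnected)
    (hΔ : ∀ i, ∀ t ∈ I, 0 < ε i * (t - a i))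
    (ξ : Fin n → ℝ) :
    ∀ k : ℕ, 1 ≤ k → k ≤ n → ∀ t ∈ I,
      (∑ s ∈ Finset.Icc 1 k,
          (Nat.choose (n - s) (k - s) : ℝ) * (-t) ^ (k - s) * bk n a ε ξ (n - s + 1) t) =
        (-1 : ℝ) ^ k *
          ∑ i, ξ i / (ε i * (t - a i)) ^ ((1/2) : ℝ) * sigmaI n a i ((k : ℤ) - 1) :=
  stmt7_general n a ε I hΔ ξ
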